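/- arXiv:2503.06478 — 3 statements merged into one kernel-verified Lean document; each statement's English description precedes it below -/
import Mathlib

section
/- Let f, g : {0,1}^n → R be injective functions satisfying f(x) = g(x + a) for all x (addition modulo 2^n), and write a = a_1 ∥ a_2 with a_1 the top t bits and a_2 the bottom n−t bits. For u ∈ {0,1}^{n−t}, define the multiset H(u) = {f(w ∥ u) : w ∈ {0,1}^t} and R(u) = {g(w ∥ u) : w ∈ {0,1}^t}, where w ∥ u denotes the integer w·2^{n−t} + u. Then for all u, v ∈ {0,1}^{n−t}: H(u) = R(v) (as sets) if and only if u + a_2 = v modulo 2^{n−t}. -/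
/-!
Adding `a = a₁ ∥ a₂` to `w ∥ u` gives `(w + a₁ + c) ∥ (u + a₂)`, where the carry `c` depends
only on `u`. As `w` runs over all high parts so does `w + a₁ + c`, hence `f` maps the slice with
low part `u` onto the image under `g` of the slice with low part `u + a₂`. Conversely, reducing
`w ∥ u` modulo the low modulus recovers `u`, so distinct slices are disjoint and, `g` being
injective, so are their images.
-/

section Concat

variable {Q P N : ℕ}

def concat (w : ZMod Q) (u : ZMod P) : ZMod N := ((w.val * P + u.val : ℕ) : ZMod N)

/-- The paper's `H(u)` (for `f`) and `R(u)` (for `g`). -/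
def sliceImage {R : Type*} (f : ZMod N → R) (Q : ℕ) (u : ZMod P) : Set R :=
  {y : R | ∃ w : ZMod Q, y = f (concat w u)}

theorem natCast_val_natCast_mul_add (hN : Q * P = N) (k r : ℕ) :
    ((((k : ZMod Q).val * P + r : ℕ)) : ZMod N) = ((k * P + r : ℕ) : ZMod N) := by
  rw [ZMod.val_natCast, ← Nat.mul_mod_mul_right, ← hN]
  push_cast [ZMod.natCast_mod]
  rfl

theorem concat_add_natCast [NeZero Q] [NeZero P] (hN : Q * P = N) (w : ZMod Q) (u : ZMod P)
    (b₁ b₂ : ℕ) :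
    (concat w u : ZMod N) + ((b₁ * P + b₂ : ℕ) : ZMod N) =
      concat (w + ((b₁ + (u.val + b₂) / P : ℕ) : ZMod Q)) (u + (b₂ : ZMod P)) := by
  have hw : w + ((b₁ + (u.val + b₂) / P : ℕ) : ZMod Q) =
      ((w.val + (b₁ + (u.val + b₂) / P) : ℕ) : ZMod Q) := by
    push_cast [ZMod.natCast_zmod_val]; rfl
  have hu : (u + (b₂ : ZMod P)).val = (u.val + b₂) % P := by
    rw [ZMod.val_add, ZMod.val_natCast, Nat.add_mod_mod]
  rw [concat, concat, hw, hu, natCast_val_natCast_mul_add hN, ← Nat.cast_add]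
  congr 1
  have := Nat.div_add_mod' (u.val + b₂) P
  linarith

theorem castHom_concat [NeZero P] (h : P ∣ N) (w : ZMod Q) (u : ZMod P) :
    ZMod.castHom h (ZMod P) (concat w u) = u := by
  rw [concat, map_natCast]
  push_cast [ZMod.natCast_self, ZMod.natCast_zmod_val]
  ring

theorem right_eq_of_concat_eq_concat [NeZero P] (hPN : P ∣ N) {w w' : ZMod Q}
    {u u' : ZMod P} (h : (concat w u : ZMod N) = concat w' u') : u = u' := by
  rw [← castHom_concat hPN w u, ← castHom_concat hPN w' u', h]

end Concat

section SliceImage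

variable {R : Type*} {Q P N : ℕ} [NeZero P] {f g : ZMod N → R}

theorem sliceImage_eq_of_eq_comp_add [NeZero Q] (hN : Q * P = N) {b₁ b₂ : ℕ}
    (hfg : ∀ x, f x = g (x + ((b₁ * P + b₂ : ℕ) : ZMod N))) (u : ZMod P) :
    sliceImage f Q u = sliceImage g Q (u + (b₂ : ZMod P)) := by
  set c : ZMod Q := ((b₁ + (u.val + b₂) / P : ℕ) : ZMod Q)
  have hshift (w : ZMod Q) : f (concat w u) = g (concat (w + c) (u + (b₂ : ZMod P))) := by
    rw [hfg, concat_add_natCast hN]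
  ext y
  constructor
  · rintro ⟨w, rfl⟩
    exact ⟨w + c, hshift w⟩
  · rintro ⟨w, rfl⟩
    exact ⟨w - c, by rw [hshift, sub_add_cancel]⟩

theorem sliceImage_injective (hPN : P ∣ N) (hg : Function.Injective g) :
    Function.Injective (sliceImage g Q : ZMod P → Set R) := by
  intro v v' h
  have hv : g (concat 0 v) ∈ sliceImage g Q v := ⟨0, rfl⟩
  obtain ⟨w, hw⟩ : g (concat 0 v) ∈ sliceImage g Q v' := h ▸ hv
  exact right_eq_of_concat_eq_concat hPN (hg hw)

end SliceImage

theorem distributed_sets_eq_iff_shift_general (n t : ℕ) (htn : t < n) (R : Type*)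
    (f g : ZMod (2 ^ n) → R)
    (hg : Function.Injective g)
    (a₁ a₂ : ℕ)
    (hfg : ∀ x : ZMod (2 ^ n),
      f x = g (x + ((a₁ * 2 ^ (n - t) + a₂ : ℕ) : ZMod (2 ^ n)))) :
    ∀ u v : ZMod (2 ^ (n - t)),
      {y : R | ∃ w : ZMod (2 ^ t),
          y = f ((w.val * 2 ^ (n - t) + u.val : ℕ) : ZMod (2 ^ n))} =
        {y : R | ∃ w : ZMod (2 ^ t),
          y = g ((w.val * 2 ^ (n - t) + v.val : ℕ) : ZMod (2 ^ n))} ↔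
      u + (a₂ : ZMod (2 ^ (n - t))) = v := by
  intro u v
  have hN : 2 ^ t * 2 ^ (n - t) = 2 ^ n := by rw [← pow_add, Nat.add_sub_cancel' htn.le]
  change sliceImage f _ u = sliceImage g _ v ↔ _
  rw [sliceImage_eq_of_eq_comp_add hN hfg]
  exact (sliceImage_injective (Dvd.intro_left _ hN) hg).eq_iff

/-- Distributed decomposition: with `f, g : Z_{2^n} → R` injective and `f(x) = g(x+a)`,
`a = a₁·2^{n-t} + a₂`, the sets `H(u) = {f(w∥u)}` and `R(v) = {g(w∥v)}` (`w` ranging over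
`{0,1}^t`, `w∥u = w·2^{n-t} + u`) satisfy `H(u) = R(v)` iff `u + a₂ = v` in `Z_{2^{n-t}}`. -/
theorem distributed_sets_eq_iff_shift (n t : ℕ) (ht : 1 ≤ t) (htn : t < n) (R : Type*)
    (f g : ZMod (2 ^ n) → R)
    (hf : Function.Injective f) (hg : Function.Injective g)
    (a₁ a₂ : ℕ) (ha₁ : a₁ < 2 ^ t) (ha₂ : a₂ < 2 ^ (n - t))
    (hfg : ∀ x : ZMod (2 ^ n),
      f x = g (x + ((a₁ * 2 ^ (n - t) + a₂ : ℕ) : ZMod (2 ^ n)))) :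
    ∀ u v : ZMod (2 ^ (n - t)),
      {y : R | ∃ w : ZMod (2 ^ t),
          y = f ((w.val * 2 ^ (n - t) + u.val : ℕ) : ZMod (2 ^ n))} =
        {y : R | ∃ w : ZMod (2 ^ t),
          y = g ((w.val * 2 ^ (n - t) + v.val : ℕ) : ZMod (2 ^ n))} ↔
      u + (a₂ : ZMod (2 ^ (n - t))) = v :=
  distributed_sets_eq_iff_shift_general n t htn R f g hg a₁ a₂ hfg
end

section
/- Let |ψ_l⟩ = (|0⟩ + e^{2πi l a/2^n}|1⟩)/√2 for l ∈ Z_{2^n}. Applying a CNOT with a copy ψ_{l1} ⊗ ψ_{l2} (first qubit control, second target) and then measuring the second qubit in the computational basis yields, upon outcome 0, the post-measurement state of the first qubit proportional to |0⟩ + e^{2πi (l1+l2) a/2^n}|1⟩, and upon outcome 1, proportional to |0⟩ + e^{2πi (l1−l2) a/2^n}|1⟩; each outcome occurs with probability 1/2 when e^{2πi l2 a/2^{n-1}} ≠ 1, computed from the state CNOT(ψ_{l1} ⊗ ψ_{l2}). -/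
/-!
After the CNOT the amplitude of `|b⟩|c⟩` is `ψ_{l₁}(b) ψ_{l₂}(b ⊕ c)`. On outcome `c = 0` this is
`ω^{l₁ b} ω^{l₂ b} / 2`, on outcome `c = 1` it is
`ω^{l₁ b} ω^{l₂ (1 - b)} / 2 = ω^{l₂} ω^{(l₁ - l₂) b} / 2`.
Since `|ω| = 1`, every amplitude has modulus `1/2`, so each outcome has probability `1/4 + 1/4`.
-/

open Complex

noncomputable def phaseQubit (ω : ℂ) (l : ℤ) (b : Fin 2) : ℂ :=
  (1 / Real.sqrt 2 : ℝ) * ω ^ (l * b.val)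

theorem norm_exp_two_pi_I_mul_int_div_two_pow (a : ℤ) (n : ℕ) :
    ‖Complex.exp (2 * Real.pi * Complex.I * a / 2 ^ n)‖ = 1 := by
  have h : (2 * Real.pi * Complex.I * a / 2 ^ n : ℂ) = ((2 * Real.pi * a / 2 ^ n : ℝ) : ℂ) * I := by
    push_cast; ring
  rw [h, Complex.norm_exp_ofReal_mul_I]

theorem inv_sqrt_two_mul_self : ((1 / Real.sqrt 2 : ℝ) : ℂ) * ((1 / Real.sqrt 2 : ℝ) : ℂ) = 1 / 2 := by
  rw [← Complex.ofReal_mul, one_div_mul_one_div, Real.mul_self_sqrt zero_le_two]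
  push_cast; rfl

section phaseQubit

variable {ω : ℂ}

theorem phaseQubit_mul_phaseQubit (hω : ω ≠ 0) (l₁ l₂ : ℤ) (b : Fin 2) :
    phaseQubit ω l₁ b * phaseQubit ω l₂ b = 1 / 2 * ω ^ ((l₁ + l₂) * b.val) := by
  rw [phaseQubit, phaseQubit, add_mul, zpow_add₀ hω, ← inv_sqrt_two_mul_self]
  ring

theorem phaseQubit_mul_phaseQubit_add_one (hω : ω ≠ 0) (l₁ l₂ : ℤ) (b : Fin 2) :
    phaseQubit ω l₁ b * phaseQubit ω l₂ (b + 1) =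
      1 / 2 * ω ^ l₂ * ω ^ ((l₁ - l₂) * b.val) := by
  rw [phaseQubit, phaseQubit, mul_mul_mul_comm, inv_sqrt_two_mul_self, mul_assoc]
  congr 1
  fin_cases b
  · simp
  · simp [← zpow_add₀ hω]

theorem norm_phaseQubit_sq (hω : ‖ω‖ = 1) (l : ℤ) (b : Fin 2) :
    ‖phaseQubit ω l b‖ ^ 2 = 1 / 2 := by
  rw [phaseQubit, norm_mul, norm_zpow, hω, one_zpow, mul_one, Complex.norm_real,
    Real.norm_eq_abs, sq_abs, div_pow, Real.sq_sqrt zero_le_two, one_pow]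

theorem sum_norm_phaseQubit_mul_phaseQubit_add_sq (hω : ‖ω‖ = 1) (l₁ l₂ : ℤ) (k : Fin 2) :
    ∑ b : Fin 2, ‖phaseQubit ω l₁ b * phaseQubit ω l₂ (b + k)‖ ^ 2 = 1 / 2 := by
  simp only [norm_mul, mul_pow, norm_phaseQubit_sq hω, Fin.sum_univ_two]
  norm_num

end phaseQubit

theorem cnot_sieve_combination_general (n : ℕ) (a l₁ l₂ : ℤ)
    (ω : ℂ) (hω : ω = Complex.exp (2 * Real.pi * Complex.I * a / 2 ^ n))
    (ψ : ℤ → Fin 2 → ℂ)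
    (hψ : ∀ l b, ψ l b = (1 / Real.sqrt 2 : ℝ) * ω ^ (l * b.val))
    (Φ : Fin 2 × Fin 2 → ℂ)
    (hΦ : ∀ p, Φ p = ψ l₁ p.1 * ψ l₂ (p.1 + p.2)) :  -- state after CNOT
    (∃ c : ℂ, c ≠ 0 ∧ ∀ b : Fin 2, Φ (b, 0) = c * ω ^ ((l₁ + l₂) * b.val)) ∧
    (∃ c : ℂ, c ≠ 0 ∧ ∀ b : Fin 2, Φ (b, 1) = c * ω ^ ((l₁ - l₂) * b.val)) ∧
    (Complex.exp (2 * Real.pi * Complex.I * l₂ * a / 2 ^ (n - 1)) ≠ 1 →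
      (∑ b : Fin 2, ‖Φ (b, 0)‖ ^ 2 = 1 / 2) ∧ (∑ b : Fin 2, ‖Φ (b, 1)‖ ^ 2 = 1 / 2)) := by
  have hω_norm : ‖ω‖ = 1 := hω ▸ norm_exp_two_pi_I_mul_int_div_two_pow a n
  have hω0 : ω ≠ 0 := norm_ne_zero_iff.mp (hω_norm ▸ one_ne_zero)
  obtain rfl : ψ = phaseQubit ω := funext fun l => funext (hψ l)
  simp only [hΦ]
  refine ⟨⟨1 / 2, one_div_ne_zero two_ne_zero, fun b => ?_⟩,
    ⟨1 / 2 * ω ^ l₂, mul_ne_zero (one_div_ne_zero two_ne_zero) (zpow_ne_zero _ hω0),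
      phaseQubit_mul_phaseQubit_add_one hω0 l₁ l₂⟩,
    fun _ => ⟨sum_norm_phaseQubit_mul_phaseQubit_add_sq hω_norm l₁ l₂ 0,
      sum_norm_phaseQubit_mul_phaseQubit_add_sq hω_norm l₁ l₂ 1⟩⟩
  rw [add_zero]
  exact phaseQubit_mul_phaseQubit hω0 l₁ l₂ b

/-- Combining `ψ_{l₁} ⊗ ψ_{l₂}` (where `ψ_l = (|0⟩ + ω^l|1⟩)/√2`, `ω = e^{2πia/2^n}`) by a
CNOT (first qubit control, second target) and measuring the second qubit yields, on outcome
`0`, a first-qubit state proportional to `|0⟩ + ω^{l₁+l₂}|1⟩` and, on outcome `1`, a state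
proportional to `|0⟩ + ω^{l₁-l₂}|1⟩`; each outcome has probability `1/2` when
`e^{2πil₂a/2^{n-1}} ≠ 1`. -/
theorem cnot_sieve_combination (n : ℕ) (hn : 1 ≤ n) (a l₁ l₂ : ℤ)
    (ω : ℂ) (hω : ω = Complex.exp (2 * Real.pi * Complex.I * a / 2 ^ n))
    (ψ : ℤ → Fin 2 → ℂ)
    (hψ : ∀ l b, ψ l b = (1 / Real.sqrt 2 : ℝ) * ω ^ (l * b.val))
    (Φ : Fin 2 × Fin 2 → ℂ)
    (hΦ : ∀ p, Φ p = ψ l₁ p.1 * ψ l₂ (p.1 + p.2)) :  -- state after CNOT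
    (∃ c : ℂ, c ≠ 0 ∧ ∀ b : Fin 2, Φ (b, 0) = c * ω ^ ((l₁ + l₂) * b.val)) ∧
    (∃ c : ℂ, c ≠ 0 ∧ ∀ b : Fin 2, Φ (b, 1) = c * ω ^ ((l₁ - l₂) * b.val)) ∧
    (Complex.exp (2 * Real.pi * Complex.I * l₂ * a / 2 ^ (n - 1)) ≠ 1 →
      (∑ b : Fin 2, ‖Φ (b, 0)‖ ^ 2 = 1 / 2) ∧ (∑ b : Fin 2, ‖Φ (b, 1)‖ ^ 2 = 1 / 2)) :=
  cnot_sieve_combination_general n a l₁ l₂ ω hω ψ hψ Φ hΦ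
end

section
/- Let f, g : Z_{2^n} → R be functions with f(x) = g(x + a mod 2^n) and write a = a_1·2^{n−t} + a_2. Suppose an algorithm A recovers a_2 ∈ Z_{2^{n−t}} given oracle access to the restricted functions f_w(u) = f(w·2^{n−t} + u) and g_w(u) = g(w·2^{n−t} + u). Then the functions f̃(w) = f(w·2^{n−t}) and g̃(w) = g(w·2^{n−t} + a_2) on Z_{2^t} satisfy f̃(w) = g̃(w + a_1') for some a_1' ∈ Z_{2^t} with a_1' ∈ {a_1, a_1 + 1 mod 2^t}; in particular if a_2 = 0 then f̃(w) = g̃(w + a_1) for all w ∈ Z_{2^t}. -/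
/-- Given `f(x) = g(x + a)` on `Z_{2^n}` with `a = a₁·2^{n-t} + a₂`, once `a₂` is known the
functions `f̃(w) = f(w·2^{n-t})` and `g̃(w) = g(w·2^{n-t} + a₂)` on `Z_{2^t}` satisfy
`f̃(w) = g̃(w + a₁')` for some `a₁' ∈ {a₁, a₁+1}`; in particular if `a₂ = 0` then
`f̃(w) = g̃(w + a₁)` for all `w`. -/
theorem recursive_high_bits (n t : ℕ) (ht : 1 ≤ t) (htn : t < n) (R : Type*)
    (f g : ZMod (2 ^ n) → R) (a : ℕ) (ha : a < 2 ^ n)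
    (hfg : ∀ x : ZMod (2 ^ n), f x = g (x + (a : ZMod (2 ^ n))))
    (a₁ a₂ : ℕ) (ha₁ : a₁ = a / 2 ^ (n - t)) (ha₂ : a₂ = a % 2 ^ (n - t))
    (f' g' : ZMod (2 ^ t) → R)
    (hf' : ∀ w : ZMod (2 ^ t), f' w = f ((w.val * 2 ^ (n - t) : ℕ) : ZMod (2 ^ n)))
    (hg' : ∀ w : ZMod (2 ^ t), g' w = g ((w.val * 2 ^ (n - t) + a₂ : ℕ) : ZMod (2 ^ n))) :
    (∃ a₁' : ZMod (2 ^ t),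
      (a₁' = (a₁ : ZMod (2 ^ t)) ∨ a₁' = (a₁ : ZMod (2 ^ t)) + 1) ∧
      ∀ w : ZMod (2 ^ t), f' w = g' (w + a₁')) ∧
    (a₂ = 0 → ∀ w : ZMod (2 ^ t), f' w = g' (w + (a₁ : ZMod (2 ^ t)))) := by
  have h2n : (2:ℕ)^n = 2^t * 2^(n-t) := by
    rw [← pow_add]; congr 1; omega
  have ha' : a₁ * 2^(n-t) + a₂ = a := by
    rw [ha₁, ha₂, mul_comm]
    exact Nat.div_add_mod a _
  have key : ∀ w : ZMod (2^t), f' w = g' (w + (a₁ : ZMod (2^t))) := by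
    intro w
    rw [hf', hfg, hg']
    congr 1
    have hcast : ((w.val * 2 ^ (n - t) + a : ℕ) : ZMod (2^n)) =
        (((w + (a₁ : ZMod (2^t))).val * 2 ^ (n - t) + a₂ : ℕ) : ZMod (2^n)) := by
      rw [ZMod.natCast_eq_natCast_iff]
      have hv : (w + (a₁ : ZMod (2^t))).val ≡ w.val + a₁ [MOD 2^t] := by
        rw [ZMod.val_add, ZMod.val_natCast]
        exact (Nat.mod_modEq _ _).trans (Nat.ModEq.add_left _ (Nat.mod_modEq _ _))
      calc w.val * 2 ^ (n - t) + a
          = (w.val + a₁) * 2^(n-t) + a₂ := by rw [add_mul]; omega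
        _ ≡ (w + (a₁ : ZMod (2^t))).val * 2^(n-t) + a₂ [MOD 2^n] := by
            rw [h2n]
            exact Nat.ModEq.add_right _ (Nat.ModEq.mul_right' _ hv.symm)
    push_cast at hcast ⊢
    rw [← hcast]
  exact ⟨⟨(a₁ : ZMod (2^t)), Or.inl rfl, key⟩, fun _ => key⟩
end
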